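/- arXiv:1805.06744 — 4 statements merged into one kernel-verified Lean document; each statement's English description precedes it below -/
import Mathlib

section
/- (Key inequality in the proof of Lemma 2) Let C ⊆ ℝ³ be a bounded measurable set and ρ : ℝ³ → ℝ integrable on C with ρ ≥ 0, and set m_F := ∫_C ρ. Then for every a ∈ ℝ³ one has ‖∫_C ρ(x)(a × x) dx‖² ≤ m_F · ∫_C ρ(x)·‖a × x‖² dx. Consequently, for every m_S with m_S ≥ m_F and m_S > 0, and every a ∈ ℝ³, aᵀ·I_g(ρ)·a ≤ (m_F/m_S)·aᵀ·Ī(ρ)·a. -/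
open MeasureTheory Matrix

noncomputable section

/-- The cross product on `ℝ³` (Euclidean space). -/
def cross3 (a b : EuclideanSpace ℝ (Fin 3)) : EuclideanSpace ℝ (Fin 3) :=
  WithLp.toLp 2 (crossProduct a b)

/-- `Ī(ρ) := ∫_C ρ(x)(‖x‖²·𝟙 − x ⊗ x) dx`, the inertia tensor of the fluid about the origin
(entrywise integral). -/
def Ibar (C : Set (EuclideanSpace ℝ (Fin 3))) (ρ : EuclideanSpace ℝ (Fin 3) → ℝ) :
    Matrix (Fin 3) (Fin 3) ℝ :=
  Matrix.of fun i j =>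
    ∫ x in C, ρ x * (‖x‖ ^ 2 * (if i = j then (1 : ℝ) else 0) - x i * x j)

/-- `g(ρ) := ∫_C ρ(x)·x dx`. -/
def gvec (C : Set (EuclideanSpace ℝ (Fin 3))) (ρ : EuclideanSpace ℝ (Fin 3) → ℝ) :
    EuclideanSpace ℝ (Fin 3) :=
  ∫ x in C, ρ x • x

/-- `I_g(ρ) := (1/m_S)·(‖g(ρ)‖²·𝟙 − g(ρ) ⊗ g(ρ))`. -/
def Ig (C : Set (EuclideanSpace ℝ (Fin 3))) (ρ : EuclideanSpace ℝ (Fin 3) → ℝ) (mS : ℝ) :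
    Matrix (Fin 3) (Fin 3) ℝ :=
  (1 / mS) • Matrix.of fun i j =>
    ‖gvec C ρ‖ ^ 2 * (if i = j then (1 : ℝ) else 0) - gvec C ρ i * gvec C ρ j

/- ### Auxiliary lemmas -/

lemma normsq3 (v : EuclideanSpace ℝ (Fin 3)) : ‖v‖ ^ 2 = v 0 ^ 2 + v 1 ^ 2 + v 2 ^ 2 := by
  rw [EuclideanSpace.norm_eq, Real.sq_sqrt (by positivity)]
  simp [Fin.sum_univ_three, sq_abs]

lemma cross3_0 (a b : EuclideanSpace ℝ (Fin 3)) : cross3 a b 0 = a 1 * b 2 - a 2 * b 1 := by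
  simp [cross3, cross_apply]
lemma cross3_1 (a b : EuclideanSpace ℝ (Fin 3)) : cross3 a b 1 = a 2 * b 0 - a 0 * b 2 := by
  simp [cross3, cross_apply]
lemma cross3_2 (a b : EuclideanSpace ℝ (Fin 3)) : cross3 a b 2 = a 0 * b 1 - a 1 * b 0 := by
  simp [cross3, cross_apply]

lemma quadform3 (a g : EuclideanSpace ℝ (Fin 3)) :
    ∑ i, ∑ j, a i * (‖g‖ ^ 2 * (if i = j then (1:ℝ) else 0) - g i * g j) * a j
      = ‖cross3 a g‖ ^ 2 := by
  rw [normsq3 (cross3 a g), cross3_0, cross3_1, cross3_2]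
  simp [Fin.sum_univ_three, normsq3 g]
  ring

lemma cross3_norm_le (a b : EuclideanSpace ℝ (Fin 3)) : ‖cross3 a b‖ ≤ ‖a‖ * ‖b‖ := by
  have h : ‖cross3 a b‖ ^ 2 ≤ (‖a‖ * ‖b‖) ^ 2 := by
    rw [normsq3 (cross3 a b), cross3_0, cross3_1, cross3_2, mul_pow, normsq3 a, normsq3 b]
    nlinarith [sq_nonneg (a 0 * b 0 + a 1 * b 1 + a 2 * b 2)]
  nlinarith [norm_nonneg (cross3 a b), mul_nonneg (norm_nonneg a) (norm_nonneg b)]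

lemma abs_coord_le (x : EuclideanSpace ℝ (Fin 3)) (i : Fin 3) : |x i| ≤ ‖x‖ := by
  have h := normsq3 x
  have h0 := norm_nonneg x
  have hsq : x i ^ 2 ≤ ‖x‖ ^ 2 := by
    rw [h]
    fin_cases i <;> simp [Fin.isValue] <;>
      nlinarith [sq_nonneg (x 0), sq_nonneg (x 1), sq_nonneg (x 2)]
  nlinarith [abs_nonneg (x i), sq_abs (x i)]

/-- The linear map `x ↦ a × x` as a continuous linear map on `ℝ³`. -/
def crossLin (a : EuclideanSpace ℝ (Fin 3)) :
    EuclideanSpace ℝ (Fin 3) →L[ℝ] EuclideanSpace ℝ (Fin 3) :=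
  LinearMap.toContinuousLinearMap
    { toFun := fun x => cross3 a x
      map_add' := fun x y => by simp [cross3, WithLp.ofLp_add, map_add, WithLp.toLp_add]
      map_smul' := fun c x => by simp [cross3, WithLp.ofLp_smul, WithLp.toLp_smul] }

lemma crossLin_apply (a x : EuclideanSpace ℝ (Fin 3)) : crossLin a x = cross3 a x := rfl

lemma integrableOn_rho_mul {C : Set (EuclideanSpace ℝ (Fin 3))} (hC_meas : MeasurableSet C)
    {ρ : EuclideanSpace ℝ (Fin 3) → ℝ} (hρ_int : IntegrableOn ρ C)
    {g : EuclideanSpace ℝ (Fin 3) → ℝ} (hg : Continuous g) {M : ℝ}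
    (hM : ∀ x ∈ C, |g x| ≤ M) : IntegrableOn (fun x => ρ x * g x) C := by
  have hbd : ∀ᵐ x ∂(volume.restrict C), ‖g x‖ ≤ M := by
    filter_upwards [ae_restrict_mem hC_meas] with x hx using by simpa using hM x hx
  exact (hρ_int.bdd_mul hg.aestronglyMeasurable hbd).congr
    (Filter.Eventually.of_forall fun x => mul_comm _ _)

lemma quadform_dot (a g : EuclideanSpace ℝ (Fin 3)) :
    a ⬝ᵥ ((Matrix.of fun i j =>
        ‖g‖ ^ 2 * (if i = j then (1:ℝ) else 0) - g i * g j) *ᵥ a)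
      = ‖cross3 a g‖ ^ 2 := by
  rw [← quadform3 a g]
  simp only [Matrix.mulVec, dotProduct, Matrix.of_apply, Finset.mul_sum]
  exact Finset.sum_congr rfl fun i _ => Finset.sum_congr rfl fun j _ => by ring

/-- **Key inequality in the proof of Lemma 2.** For a nonnegative integrable density `ρ` on a
bounded measurable set `C ⊆ ℝ³`:
`‖∫_C ρ(x)(a × x) dx‖² ≤ m_F · ∫_C ρ(x)·‖a × x‖² dx` for every `a ∈ ℝ³`, and consequently
`aᵀ·I_g(ρ)·a ≤ (m_F/m_S)·aᵀ·Ī(ρ)·a` whenever `m_S ≥ m_F` and `m_S > 0`. -/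
theorem key_inequality_lemma2 (C : Set (EuclideanSpace ℝ (Fin 3)))
    (hC_meas : MeasurableSet C) (hC_bdd : Bornology.IsBounded C)
    (ρ : EuclideanSpace ℝ (Fin 3) → ℝ) (hρ_int : IntegrableOn ρ C)
    (hρ_nonneg : ∀ x, 0 ≤ ρ x)
    (mF : ℝ) (hmF : mF = ∫ x in C, ρ x) :
    (∀ a : EuclideanSpace ℝ (Fin 3),
        ‖∫ x in C, ρ x • cross3 a x‖ ^ 2 ≤ mF * ∫ x in C, ρ x * ‖cross3 a x‖ ^ 2) ∧
    (∀ mS : ℝ, mF ≤ mS → 0 < mS → ∀ a : EuclideanSpace ℝ (Fin 3),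
        a ⬝ᵥ (Ig C ρ mS *ᵥ a) ≤ (mF / mS) * (a ⬝ᵥ (Ibar C ρ *ᵥ a))) := by
  obtain ⟨R, hR⟩ := isBounded_iff_forall_norm_le.mp hC_bdd
  set R₀ : ℝ := max R 0 with hR₀def
  have hR₀ : ∀ x ∈ C, ‖x‖ ≤ R₀ := fun x hx => (hR x hx).trans (le_max_left _ _)
  have hR₀0 : 0 ≤ R₀ := le_max_right _ _
  have hA0 : 0 ≤ ∫ x in C, ρ x := setIntegral_nonneg hC_meas fun x _ => hρ_nonneg x
  -- integrability of ρ·‖a×x‖ and ρ·‖a×x‖²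
  have intB : ∀ a : EuclideanSpace ℝ (Fin 3),
      IntegrableOn (fun x => ρ x * ‖cross3 a x‖) C := by
    intro a
    refine integrableOn_rho_mul hC_meas hρ_int
      ((crossLin a).continuous.norm) (M := ‖a‖ * R₀) fun x hx => ?_
    rw [abs_of_nonneg (norm_nonneg _)]
    exact (cross3_norm_le a x).trans
      (mul_le_mul_of_nonneg_left (hR₀ x hx) (norm_nonneg a))
  have intD : ∀ a : EuclideanSpace ℝ (Fin 3),
      IntegrableOn (fun x => ρ x * ‖cross3 a x‖ ^ 2) C := by
    intro a
    refine integrableOn_rho_mul hC_meas hρ_int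
      (((crossLin a).continuous.norm).pow 2) (M := (‖a‖ * R₀) ^ 2) fun x hx => ?_
    rw [abs_of_nonneg (sq_nonneg _)]
    have h3 : ‖cross3 a x‖ ≤ ‖a‖ * R₀ := (cross3_norm_le a x).trans
      (mul_le_mul_of_nonneg_left (hR₀ x hx) (norm_nonneg a))
    exact pow_le_pow_left₀ (norm_nonneg _) h3 2
  have hD0 : ∀ a : EuclideanSpace ℝ (Fin 3),
      0 ≤ ∫ x in C, ρ x * ‖cross3 a x‖ ^ 2 := fun a =>
    setIntegral_nonneg hC_meas fun x _ => mul_nonneg (hρ_nonneg x) (sq_nonneg _)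
  -- Part 1
  have P1 : ∀ a : EuclideanSpace ℝ (Fin 3),
      ‖∫ x in C, ρ x • cross3 a x‖ ^ 2 ≤ mF * ∫ x in C, ρ x * ‖cross3 a x‖ ^ 2 := by
    intro a
    set A : ℝ := ∫ x in C, ρ x with hA
    set B : ℝ := ∫ x in C, ρ x * ‖cross3 a x‖ with hB
    set D : ℝ := ∫ x in C, ρ x * ‖cross3 a x‖ ^ 2 with hD
    have hB0 : 0 ≤ B :=
      setIntegral_nonneg hC_meas fun x _ => mul_nonneg (hρ_nonneg x) (norm_nonneg _)
    -- Cauchy-Schwarz: B² ≤ A·D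
    have hBD : B ^ 2 ≤ A * D := by
      rcases eq_or_lt_of_le hA0 with h0 | hpos
      · -- A = 0: ρ = 0 a.e. on C, so B = 0
        have hae : ρ =ᵐ[volume.restrict C] 0 :=
          (integral_eq_zero_iff_of_nonneg (fun x => hρ_nonneg x) hρ_int).mp h0.symm
        have hBz : B = 0 := by
          rw [hB]
          rw [integral_congr_ae (g := fun _ => (0:ℝ))
            (by filter_upwards [hae] with x hx; simp [hx])]
          simp
        rw [hBz, ← h0]
        simp
      · -- A > 0: expand ∫ ρ (B - A‖a×x‖)² ≥ 0
        have key : 0 ≤ ∫ x in C, ρ x * (B - A * ‖cross3 a x‖) ^ 2 :=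
          setIntegral_nonneg hC_meas fun x _ => mul_nonneg (hρ_nonneg x) (sq_nonneg _)
        have expand : (∫ x in C, ρ x * (B - A * ‖cross3 a x‖) ^ 2)
            = B ^ 2 * A - 2 * A * B * B + A ^ 2 * D := by
          have step : (fun x => ρ x * (B - A * ‖cross3 a x‖) ^ 2)
              = fun x => B ^ 2 * ρ x - 2 * A * B * (ρ x * ‖cross3 a x‖)
                + A ^ 2 * (ρ x * ‖cross3 a x‖ ^ 2) := by
            funext x; ring
          have i1 : Integrable (fun x => B ^ 2 * ρ x) (volume.restrict C) :=
            hρ_int.const_mul _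
          have i2 : Integrable (fun x => 2 * A * B * (ρ x * ‖cross3 a x‖))
              (volume.restrict C) := (intB a).const_mul _
          have i3 : Integrable (fun x => A ^ 2 * (ρ x * ‖cross3 a x‖ ^ 2))
              (volume.restrict C) := (intD a).const_mul _
          have i12 : Integrable (fun x => B ^ 2 * ρ x
              - 2 * A * B * (ρ x * ‖cross3 a x‖)) (volume.restrict C) := i1.sub i2
          rw [step, integral_add i12 i3, integral_sub i1 i2,
            integral_const_mul, integral_const_mul, integral_const_mul, ← hA, ← hB, ← hD]
        rw [expand] at key
        nlinarith [key, hpos]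
    have hnorm : ‖∫ x in C, ρ x • cross3 a x‖ ≤ B := by
      refine (norm_integral_le_integral_norm _).trans ?_
      refine le_of_eq (integral_congr_ae (Filter.Eventually.of_forall fun x => ?_))
      show ‖ρ x • cross3 a x‖ = ρ x * ‖cross3 a x‖
      rw [norm_smul, Real.norm_of_nonneg (hρ_nonneg x)]
    calc ‖∫ x in C, ρ x • cross3 a x‖ ^ 2 ≤ B ^ 2 :=
          pow_le_pow_left₀ (norm_nonneg _) hnorm 2
      _ ≤ A * D := hBD
      _ = mF * D := by rw [hmF, hA]
  refine ⟨P1, ?_⟩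
  -- Part 2
  intro mS hle hpos a
  -- integrability of x ↦ ρ x • x
  have intg : IntegrableOn (fun x => ρ x • x) C := by
    refine Integrable.mono' (hρ_int.const_mul R₀)
      (hρ_int.aestronglyMeasurable.smul aestronglyMeasurable_id) ?_
    filter_upwards [ae_restrict_mem hC_meas] with x hx
    rw [norm_smul, Real.norm_of_nonneg (hρ_nonneg x)]
    calc ρ x * ‖x‖ ≤ ρ x * R₀ := mul_le_mul_of_nonneg_left (hR₀ x hx) (hρ_nonneg x)
      _ = R₀ * ρ x := mul_comm _ _
  -- a × g(ρ) = ∫ ρ (a × x)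
  have gcross : cross3 a (gvec C ρ) = ∫ x in C, ρ x • cross3 a x := by
    have h1 : crossLin a (∫ x in C, ρ x • x) = ∫ x in C, crossLin a (ρ x • x) :=
      ((crossLin a).integral_comp_comm intg).symm
    have h2 : (fun x => crossLin a (ρ x • x)) = fun x => ρ x • cross3 a x := by
      funext x; rw [(crossLin a).map_smul, crossLin_apply]
    rw [gvec, ← crossLin_apply, h1, h2]
  -- LHS = (1/mS)·‖a × g‖²
  have hLHS : a ⬝ᵥ (Ig C ρ mS *ᵥ a) = (1 / mS) * ‖cross3 a (gvec C ρ)‖ ^ 2 := by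
    rw [Ig, smul_mulVec, dotProduct_smul, smul_eq_mul, quadform_dot]
  -- integrability of the entries of Ī
  have e_int : ∀ i j : Fin 3, IntegrableOn
      (fun x => ρ x * (‖x‖ ^ 2 * (if i = j then (1:ℝ) else 0) - x i * x j)) C := by
    intro i j
    refine integrableOn_rho_mul hC_meas hρ_int ?_ (M := R₀ ^ 2 + R₀ ^ 2) ?_
    · fun_prop
    · intro x hx
      have hn := hR₀ x hx
      have hi := abs_coord_le x i
      have hj := abs_coord_le x j
      have hij : |x i * x j| ≤ R₀ * R₀ := by
        rw [abs_mul]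
        exact mul_le_mul (hi.trans hn) (hj.trans hn) (abs_nonneg _)
          (le_trans (abs_nonneg _) (hi.trans hn))
      have hij' := abs_le.mp hij
      rw [abs_le]
      constructor <;> split_ifs <;>
        nlinarith [norm_nonneg x, sq_nonneg ‖x‖, hij'.1, hij'.2]
  -- RHS quadratic form equals ∫ ρ‖a×x‖²
  have hRHS : a ⬝ᵥ (Ibar C ρ *ᵥ a) = ∫ x in C, ρ x * ‖cross3 a x‖ ^ 2 := by
    have e_int' : ∀ i j : Fin 3, IntegrableOn
        (fun x => a i * (ρ x * (‖x‖ ^ 2 * (if i = j then (1:ℝ) else 0) - x i * x j)) * a j)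
        C := fun i j => ((e_int i j).const_mul (a i)).mul_const (a j)
    calc a ⬝ᵥ (Ibar C ρ *ᵥ a)
        = ∑ i, ∑ j, ∫ x in C,
            a i * (ρ x * (‖x‖ ^ 2 * (if i = j then (1:ℝ) else 0) - x i * x j)) * a j := by
          simp only [Ibar, Matrix.mulVec, dotProduct, Matrix.of_apply, Finset.mul_sum]
          refine Finset.sum_congr rfl fun i _ => Finset.sum_congr rfl fun j _ => ?_
          rw [integral_mul_const, integral_const_mul]
          ring
      _ = ∑ i : Fin 3, ∫ x in C, ∑ j : Fin 3,
            a i * (ρ x * (‖x‖ ^ 2 * (if i = j then (1:ℝ) else 0) - x i * x j)) * a j := by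
          exact Finset.sum_congr rfl fun i _ =>
            (integral_finset_sum _ fun j _ => e_int' i j).symm
      _ = ∫ x in C, ∑ i : Fin 3, ∑ j : Fin 3,
            a i * (ρ x * (‖x‖ ^ 2 * (if i = j then (1:ℝ) else 0) - x i * x j)) * a j :=
          (integral_finset_sum _ fun i _ =>
            integrable_finset_sum _ fun j _ => e_int' i j).symm
      _ = ∫ x in C, ρ x * ‖cross3 a x‖ ^ 2 := by
          refine integral_congr_ae (Filter.Eventually.of_forall fun x => ?_)
          dsimp only
          rw [← quadform3 a x, Finset.mul_sum]
          refine Finset.sum_congr rfl fun i _ => ?_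
          rw [Finset.mul_sum]
          exact Finset.sum_congr rfl fun j _ => by ring
  -- conclude
  rw [hLHS, hRHS, gcross]
  have h1 : ‖∫ x in C, ρ x • cross3 a x‖ ^ 2
      ≤ mF * ∫ x in C, ρ x * ‖cross3 a x‖ ^ 2 := P1 a
  have h2 : (0:ℝ) ≤ 1 / mS := by positivity
  calc (1 / mS) * ‖∫ x in C, ρ x • cross3 a x‖ ^ 2
      ≤ (1 / mS) * (mF * ∫ x in C, ρ x * ‖cross3 a x‖ ^ 2) :=
        mul_le_mul_of_nonneg_left h1 h2
    _ = (mF / mS) * ∫ x in C, ρ x * ‖cross3 a x‖ ^ 2 := by ring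

end
end

section
/- Lemma 2 (positive definiteness of the central inertia tensor): Let C ⊆ ℝ³ be a bounded measurable set and ρ : ℝ³ → ℝ integrable on C with ρ ≥ 0 and m_F := ∫_C ρ > 0. Let I_C be a symmetric positive definite real 3×3 matrix, let m_B > 0 and set m_S := m_B + m_F. Then the matrix I(ρ) := I_C + Ī(ρ) − I_g(ρ) is symmetric and positive definite. -/
open MeasureTheory Matrix

noncomputable section

/-!
With `J(x) = ‖x‖²·𝟙 − x ⊗ x` we have `wᵀ J(x) w = ‖w‖²‖x‖² − ⟪w, x⟫² ≥ 0`, and for `w ≠ 0` this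
is `‖L_w x‖² / ‖w‖²` for the linear map `L_w x = ‖w‖²x − ⟪w, x⟫w`. Since `Ī(ρ) = ∫_C ρ J` and
`I_g(ρ) = J(g) / m_S` with `g = ∫_C ρ x`, the weighted Cauchy–Schwarz inequality
`‖∫ ρ f‖² ≤ (∫ ρ) ∫ ρ‖f‖²` applied to `f = L_w` gives
`wᵀ J(g) w ≤ m_F · wᵀ Ī(ρ) w ≤ m_S · wᵀ Ī(ρ) w`. So `Ī(ρ) − I_g(ρ)` is positive semidefinite,
and adding the positive definite `I_C` gives a positive definite matrix.
-/

open scoped RealInnerProductSpace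

section InnerProductSpace

variable {E : Type*} [NormedAddCommGroup E] [InnerProductSpace ℝ E]

theorem norm_sq_smul_sub_inner_smul (w x : E) :
    ‖‖w‖ ^ 2 • x - ⟪w, x⟫ • w‖ ^ 2 = ‖w‖ ^ 2 * (‖w‖ ^ 2 * ‖x‖ ^ 2 - ⟪w, x⟫ ^ 2) := by
  rw [norm_sub_sq_real, norm_smul, norm_smul, real_inner_smul_left, real_inner_smul_right,
    real_inner_comm, Real.norm_eq_abs, Real.norm_eq_abs, abs_of_nonneg (sq_nonneg _), mul_pow,
    mul_pow, sq_abs]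
  ring

theorem inner_sq_le_norm_sq_mul_norm_sq (w x : E) : ⟪w, x⟫ ^ 2 ≤ ‖w‖ ^ 2 * ‖x‖ ^ 2 := by
  rw [← mul_pow, ← sq_abs]
  exact pow_le_pow_left₀ (abs_nonneg _) (abs_real_inner_le_norm w x) 2

variable [CompleteSpace E]

theorem sq_norm_integral_smul_le {α : Type*} [MeasurableSpace α] {μ : Measure α} {ρ : α → ℝ}
    {f : α → E} (hρ : 0 ≤ᵐ[μ] ρ) (hρi : Integrable ρ μ)
    (hρf : Integrable (fun x => ρ x • f x) μ) (hρf2 : Integrable (fun x => ρ x * ‖f x‖ ^ 2) μ) :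
    ‖∫ x, ρ x • f x ∂μ‖ ^ 2 ≤ (∫ x, ρ x ∂μ) * ∫ x, ρ x * ‖f x‖ ^ 2 ∂μ := by
  rcases (integral_nonneg_of_ae hρ).eq_or_lt with hm | hm
  · have hρ0 : ρ =ᵐ[μ] 0 := (integral_eq_zero_iff_of_nonneg_ae hρ hρi).1 hm.symm
    have hG : ∫ x, ρ x • f x ∂μ = 0 := by
      rw [← integral_zero α E]
      exact integral_congr_ae (hρ0.mono fun x hx => by simp [hx])
    simp [hG, ← hm]
  set m := ∫ x, ρ x ∂μ
  set G := ∫ x, ρ x • f x ∂μ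
  have expand : ∀ x, ρ x * ‖m • f x - G‖ ^ 2 =
      m ^ 2 * (ρ x * ‖f x‖ ^ 2) - 2 * m * ⟪G, ρ x • f x⟫ + ‖G‖ ^ 2 * ρ x := fun x => by
    rw [norm_sub_sq_real, norm_smul, real_inner_smul_left, real_inner_smul_right,
      real_inner_comm, Real.norm_eq_abs, mul_pow, sq_abs]
    ring
  have key : 0 ≤ m * (m * ∫ x, ρ x * ‖f x‖ ^ 2 ∂μ - ‖G‖ ^ 2) :=
    calc 0 ≤ ∫ x, ρ x * ‖m • f x - G‖ ^ 2 ∂μ :=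
          integral_nonneg_of_ae (hρ.mono fun x hx => mul_nonneg hx (sq_nonneg _))
      _ = m ^ 2 * ∫ x, ρ x * ‖f x‖ ^ 2 ∂μ - 2 * m * ⟪G, G⟫ + ‖G‖ ^ 2 * m := by
          simp_rw [expand]
          rw [integral_add, integral_sub, integral_const_mul, integral_const_mul,
            integral_const_mul, integral_inner hρf]
          all_goals fun_prop
      _ = m * (m * ∫ x, ρ x * ‖f x‖ ^ 2 ∂μ - ‖G‖ ^ 2) := by
          rw [real_inner_self_eq_norm_sq]; ring
  linarith [(mul_nonneg_iff_of_pos_left hm).1 key]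

theorem norm_sq_mul_norm_sq_sub_inner_sq_integral_le [MeasurableSpace E] {μ : Measure E}
    {ρ : E → ℝ} (w : E) (hρ : 0 ≤ᵐ[μ] ρ) (hρi : Integrable ρ μ)
    (hρx : Integrable (fun x => ρ x • x) μ)
    (hρq : Integrable (fun x => ρ x * (‖w‖ ^ 2 * ‖x‖ ^ 2 - ⟪w, x⟫ ^ 2)) μ) :
    ‖w‖ ^ 2 * ‖∫ x, ρ x • x ∂μ‖ ^ 2 - ⟪w, ∫ x, ρ x • x ∂μ⟫ ^ 2 ≤
      (∫ x, ρ x ∂μ) * ∫ x, ρ x * (‖w‖ ^ 2 * ‖x‖ ^ 2 - ⟪w, x⟫ ^ 2) ∂μ := by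
  rcases eq_or_ne w 0 with rfl | hw
  · simp
  set L : E →L[ℝ] E := ‖w‖ ^ 2 • ContinuousLinearMap.id ℝ E - (innerSL ℝ w).smulRight w
  have hL : ∀ x, ‖L x‖ ^ 2 = ‖w‖ ^ 2 * (‖w‖ ^ 2 * ‖x‖ ^ 2 - ⟪w, x⟫ ^ 2) :=
    norm_sq_smul_sub_inner_smul w
  have hρL : ∀ x, ρ x • L x = L (ρ x • x) := fun x => (L.map_smul _ _).symm
  have hCS := sq_norm_integral_smul_le (f := L) hρ hρi
    (by simpa only [hρL] using L.integrable_comp hρx)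
    (by simpa only [hL, mul_left_comm (ρ _)] using hρq.const_mul (‖w‖ ^ 2))
  simp only [hρL, hL, mul_left_comm (ρ _)] at hCS
  rw [L.integral_comp_comm hρx, hL, integral_const_mul, mul_left_comm] at hCS
  exact le_of_mul_le_mul_left hCS (by positivity)

end InnerProductSpace

section PointInertia

variable {ι : Type*} [Fintype ι]

theorem dotProduct_mulVec_of_integral {α : Type*} [MeasurableSpace α] {μ : Measure α}
    {M : α → Matrix ι ι ℝ} (hM : ∀ i j, Integrable (fun x => M x i j) μ) (v : ι → ℝ) :
    v ⬝ᵥ (of fun i j => ∫ x, M x i j ∂μ) *ᵥ v = ∫ x, v ⬝ᵥ M x *ᵥ v ∂μ := by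
  have hMv : ∀ i j, Integrable (fun x => v i * (M x i j * v j)) μ := fun i j =>
    ((hM i j).mul_const _).const_mul _
  simp only [dotProduct, mulVec, of_apply, Finset.mul_sum]
  rw [integral_finsetSum _ fun i _ => integrable_finsetSum _ fun j _ => hMv i j]
  refine Finset.sum_congr rfl fun i _ => ?_
  rw [integral_finsetSum _ fun j _ => hMv i j]
  simp only [integral_const_mul, integral_mul_const]

variable [DecidableEq ι]

/-- The inertia tensor of a unit point mass at `x` about the origin. -/
def pointInertia (x : EuclideanSpace ℝ ι) : Matrix ι ι ℝ :=
  ‖x‖ ^ 2 • 1 - vecMulVec x x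

theorem pointInertia_apply (x : EuclideanSpace ℝ ι) (i j : ι) :
    pointInertia x i j = ‖x‖ ^ 2 * (if i = j then 1 else 0) - x i * x j := by
  simp [pointInertia, one_apply, vecMulVec_apply]

theorem isSymm_pointInertia (x : EuclideanSpace ℝ ι) : (pointInertia x).IsSymm := by
  simp [pointInertia, IsSymm, transpose_vecMulVec]

theorem continuous_pointInertia_apply (i j : ι) :
    Continuous fun x : EuclideanSpace ℝ ι => pointInertia x i j := by
  simp only [pointInertia_apply]
  fun_prop

theorem dotProduct_pointInertia_mulVec (x w : EuclideanSpace ℝ ι) :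
    w.ofLp ⬝ᵥ pointInertia x *ᵥ w.ofLp = ‖w‖ ^ 2 * ‖x‖ ^ 2 - ⟪w, x⟫ ^ 2 := by
  rw [← real_inner_self_eq_norm_sq w, EuclideanSpace.inner_eq_star_dotProduct,
    EuclideanSpace.inner_eq_star_dotProduct, pointInertia, sub_mulVec, smul_mulVec, one_mulVec,
    vecMulVec_mulVec, dotProduct_sub, dotProduct_smul, dotProduct_smul]
  simp only [star_trivial, smul_eq_mul, MulOpposite.smul_eq_mul_unop, MulOpposite.unop_op]
  rw [dotProduct_comm x.ofLp]
  ring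

end PointInertia

section Fluid

variable (C : Set (EuclideanSpace ℝ (Fin 3))) (ρ : EuclideanSpace ℝ (Fin 3) → ℝ)

theorem Ibar_eq_integral_pointInertia :
    Ibar C ρ = of fun i j => ∫ x in C, ρ x * pointInertia x i j :=
  rfl

theorem Ig_eq_smul_pointInertia (mS : ℝ) : Ig C ρ mS = (1 / mS) • pointInertia (gvec C ρ) :=
  rfl

theorem isSymm_Ibar : (Ibar C ρ).IsSymm :=
  IsSymm.ext fun i j => by
    simp only [Ibar_eq_integral_pointInertia, of_apply, (isSymm_pointInertia _).apply i j]

theorem isSymm_Ig (mS : ℝ) : (Ig C ρ mS).IsSymm :=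
  (isSymm_pointInertia _).smul _

variable {C ρ}

theorem dotProduct_Ibar_mulVec (hC_meas : MeasurableSet C) (hC_bdd : Bornology.IsBounded C)
    (hρ_int : IntegrableOn ρ C) (w : EuclideanSpace ℝ (Fin 3)) :
    w.ofLp ⬝ᵥ Ibar C ρ *ᵥ w.ofLp = ∫ x in C, ρ x * (‖w‖ ^ 2 * ‖x‖ ^ 2 - ⟪w, x⟫ ^ 2) := by
  have h := dotProduct_mulVec_of_integral (μ := volume.restrict C)
    (M := fun x => ρ x • pointInertia x) (fun i j => hρ_int.mul_continuousOn_of_subset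
      (continuous_pointInertia_apply i j).continuousOn hC_meas hC_bdd.isCompact_closure
      subset_closure) w.ofLp
  simp only [smul_mulVec, dotProduct_smul, smul_eq_mul, dotProduct_pointInertia_mulVec] at h
  exact h

theorem dotProduct_Ig_mulVec (mS : ℝ) (w : EuclideanSpace ℝ (Fin 3)) :
    w.ofLp ⬝ᵥ Ig C ρ mS *ᵥ w.ofLp =
      (‖w‖ ^ 2 * ‖gvec C ρ‖ ^ 2 - ⟪w, gvec C ρ⟫ ^ 2) / mS := by
  rw [Ig_eq_smul_pointInertia, smul_mulVec, dotProduct_smul, smul_eq_mul,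
    dotProduct_pointInertia_mulVec, one_div_mul_eq_div]

theorem posSemidef_Ibar_sub_Ig (hC_meas : MeasurableSet C) (hC_bdd : Bornology.IsBounded C)
    (hρ_int : IntegrableOn ρ C) (hρ_nonneg : ∀ x, 0 ≤ ρ x) {mS : ℝ}
    (hmS : ∫ x in C, ρ x ≤ mS) : (Ibar C ρ - Ig C ρ mS).PosSemidef := by
  refine PosSemidef.of_dotProduct_mulVec_nonneg
    (isHermitian_iff_isSymm.2 ((isSymm_Ibar C ρ).sub (isSymm_Ig C ρ mS))) fun v => ?_
  set w : EuclideanSpace ℝ (Fin 3) := WithLp.toLp 2 v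
  have hq : 0 ≤ ∫ x in C, ρ x * (‖w‖ ^ 2 * ‖x‖ ^ 2 - ⟪w, x⟫ ^ 2) := integral_nonneg fun x =>
    mul_nonneg (hρ_nonneg x) (sub_nonneg.2 (inner_sq_le_norm_sq_mul_norm_sq w x))
  have hCS := norm_sq_mul_norm_sq_sub_inner_sq_integral_le w (ae_of_all _ hρ_nonneg) hρ_int
    (hρ_int.smul_continuousOn_of_subset continuousOn_id hC_meas hC_bdd.isCompact_closure
      subset_closure)
    (hρ_int.mul_continuousOn_of_subset (by fun_prop) hC_meas hC_bdd.isCompact_closure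
      subset_closure)
  have hmS_nonneg : 0 ≤ mS := (integral_nonneg hρ_nonneg).trans hmS
  rw [star_trivial, sub_mulVec, dotProduct_sub, show v = w.ofLp from rfl,
    dotProduct_Ibar_mulVec hC_meas hC_bdd hρ_int, dotProduct_Ig_mulVec, sub_nonneg]
  exact div_le_of_le_mul₀ hmS_nonneg hq
    (hCS.trans (by rw [mul_comm]; exact mul_le_mul_of_nonneg_left hmS hq))

end Fluid

theorem central_inertia_tensor_posDef_general (C : Set (EuclideanSpace ℝ (Fin 3)))
    (hC_meas : MeasurableSet C) (hC_bdd : Bornology.IsBounded C)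
    (ρ : EuclideanSpace ℝ (Fin 3) → ℝ) (hρ_int : IntegrableOn ρ C)
    (hρ_nonneg : ∀ x, 0 ≤ ρ x)
    (mF : ℝ) (hmF : mF = ∫ x in C, ρ x)
    (IC : Matrix (Fin 3) (Fin 3) ℝ) (hIC_posdef : IC.PosDef)
    (mB : ℝ) (hmB : 0 < mB) (mS : ℝ) (hmS : mS = mB + mF) :
    (IC + Ibar C ρ - Ig C ρ mS).IsSymm ∧ (IC + Ibar C ρ - Ig C ρ mS).PosDef := by
  have hmF_le : ∫ x in C, ρ x ≤ mS := by linarith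
  have hpos : (IC + Ibar C ρ - Ig C ρ mS).PosDef := by
    rw [add_sub_assoc]
    exact hIC_posdef.add_posSemidef (posSemidef_Ibar_sub_Ig hC_meas hC_bdd hρ_int hρ_nonneg hmF_le)
  exact ⟨isHermitian_iff_isSymm.1 hpos.isHermitian, hpos⟩

/-- **Lemma 2 (positive definiteness of the central inertia tensor).** For a nonnegative
integrable density `ρ` on a bounded measurable set `C ⊆ ℝ³` with total fluid mass
`m_F = ∫_C ρ > 0`, a symmetric positive definite body inertia tensor `I_C`, body mass
`m_B > 0` and total mass `m_S = m_B + m_F`, the central inertia tensor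
`I(ρ) := I_C + Ī(ρ) − I_g(ρ)` of the coupled system is symmetric and positive definite. -/
theorem central_inertia_tensor_posDef (C : Set (EuclideanSpace ℝ (Fin 3)))
    (hC_meas : MeasurableSet C) (hC_bdd : Bornology.IsBounded C)
    (ρ : EuclideanSpace ℝ (Fin 3) → ℝ) (hρ_int : IntegrableOn ρ C)
    (hρ_nonneg : ∀ x, 0 ≤ ρ x)
    (mF : ℝ) (hmF : mF = ∫ x in C, ρ x) (hmF_pos : 0 < mF)
    (IC : Matrix (Fin 3) (Fin 3) ℝ) (hIC_symm : IC.IsSymm) (hIC_posdef : IC.PosDef)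
    (mB : ℝ) (hmB : 0 < mB) (mS : ℝ) (hmS : mS = mB + mF) :
    (IC + Ibar C ρ - Ig C ρ mS).IsSymm ∧ (IC + Ibar C ρ - Ig C ρ mS).PosDef :=
  central_inertia_tensor_posDef_general C hC_meas hC_bdd ρ hρ_int hρ_nonneg mF hmF IC hIC_posdef mB
    hmB mS hmS
end
end

section
/- (Density formula for steady states, equation (3.10)₁ in Proposition 1) Let C ⊆ ℝ³ be a nonempty open connected set, a > 0, γ > 1, and ω, ξ ∈ ℝ³. Let ρ : C → ℝ be continuously differentiable with ρ(x) > 0 for all x ∈ C, and suppose that for every x ∈ C: ρ(x)·(ω × (ω × x + ξ)) = −∇(a·ρ^γ)(x), where ∇ denotes the gradient with respect to x of the function x ↦ a·ρ(x)^γ. Then there exists a constant c ∈ ℝ such that for all x ∈ C: ρ(x)^{γ−1} = ((γ−1)/(2aγ))·(‖ω × x‖² − 2·((ω × ξ)·x)) + c. -/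
open scoped RealInnerProductSpace

noncomputable section

abbrev E3 := EuclideanSpace ℝ (Fin 3)

lemma cross3_add (u v w : E3) : cross3 u (v + w) = cross3 u v + cross3 u w := by
  simp [cross3, map_add]

lemma cross_sum_id (u v y : E3) :
    ∑ i : Fin 3, cross3 u v i * cross3 u y i = -∑ i : Fin 3, cross3 u (cross3 u v) i * y i := by
  simp [cross3, crossProduct, Fin.sum_univ_three]
  ring_nf

def Lom (ω : E3) : E3 →L[ℝ] E3 := LinearMap.toContinuousLinearMap
  ((WithLp.linearEquiv 2 ℝ (Fin 3 → ℝ)).symm.toLinearMap ∘ₗ crossProduct ω ∘ₗ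
    (WithLp.linearEquiv 2 ℝ (Fin 3 → ℝ)).toLinearMap)

lemma Lom_apply (ω x : E3) : Lom ω x = cross3 ω x := rfl

lemma hasFDerivAt_cross (ω x : E3) : HasFDerivAt (fun y => cross3 ω y) (Lom ω) x :=
  (Lom ω).hasFDerivAt

lemma hasGradientAt_g (k : ℝ) (ω v x : E3) :
    HasGradientAt (fun y : E3 => k * (⟪cross3 ω y, cross3 ω y⟫ - 2 * ⟪v, y⟫))
      ((-(2*k)) • (cross3 ω (cross3 ω x) + v)) x := by
  have h1 : HasFDerivAt (fun y : E3 => ⟪cross3 ω y, cross3 ω y⟫)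
      ((fderivInnerCLM ℝ (cross3 ω x, cross3 ω x)).comp ((Lom ω).prod (Lom ω))) x :=
    (hasFDerivAt_cross ω x).inner ℝ (hasFDerivAt_cross ω x)
  have h2 : HasFDerivAt (fun y : E3 => ⟪v, y⟫) (innerSL ℝ v) x := (innerSL ℝ v).hasFDerivAt
  have h3 := ((h1.sub (h2.const_mul 2)).const_mul k)
  have heq : (k • ((fderivInnerCLM ℝ (cross3 ω x, cross3 ω x)).comp ((Lom ω).prod (Lom ω)) -
        (2:ℝ) • innerSL ℝ v)) = (InnerProductSpace.toDual ℝ E3) ((-(2*k)) • (cross3 ω (cross3 ω x) + v)) := by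
    ext y
    simp [fderivInnerCLM_apply, Lom_apply, real_inner_smul_left, inner_add_left,
      PiLp.inner_apply, RCLike.inner_apply, starRingEnd_apply]
    rw [cross_sum_id ω x y]
    rw [show ∑ i : Fin 3, cross3 ω y i * cross3 ω x i
        = -∑ i : Fin 3, cross3 ω (cross3 ω x) i * y i from by
      rw [← cross_sum_id ω x y]; exact Finset.sum_congr rfl fun i _ => mul_comm _ _]
    rw [Finset.sum_congr rfl fun i _ => mul_comm (y.ofLp i) ((cross3 ω (cross3 ω x)).ofLp i)]
    ring
  rw [hasGradientAt_iff_hasFDerivAt, ← heq]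
  exact h3

/-- **Density formula for steady states (equation (3.10)₁ in Proposition 1).**
If `ρ > 0` is `C¹` on a nonempty open connected set `C ⊆ ℝ³` and satisfies the steady momentum
balance `ρ(x)·(ω × (ω × x + ξ)) = −∇(a·ρ^γ)(x)` on `C`, then there is a constant `c` with
`ρ(x)^(γ−1) = ((γ−1)/(2aγ))·(‖ω × x‖² − 2·(ω × ξ)·x) + c` on `C`. -/
theorem steady_state_density_formula (C : Set (EuclideanSpace ℝ (Fin 3)))
    (hC_open : IsOpen C) (hC_conn : IsConnected C)
    (a γ : ℝ) (ha : 0 < a) (hγ : 1 < γ)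
    (ω ξ : EuclideanSpace ℝ (Fin 3))
    (ρ : EuclideanSpace ℝ (Fin 3) → ℝ)
    (hρ_C1 : ContDiffOn ℝ 1 ρ C) (hρ_pos : ∀ x ∈ C, 0 < ρ x)
    (hmom : ∀ x ∈ C,
      ρ x • cross3 ω (cross3 ω x + ξ) = -gradient (fun y => a * ρ y ^ γ) x) :
    ∃ c : ℝ, ∀ x ∈ C,
      ρ x ^ (γ - 1) =
        ((γ - 1) / (2 * a * γ)) * (‖cross3 ω x‖ ^ 2 - 2 * ⟪cross3 ω ξ, x⟫) + c := by
  have ha' : a ≠ 0 := ne_of_gt ha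
  have hγ0 : γ ≠ 0 := by positivity
  set k : ℝ := (γ - 1) / (2 * a * γ) with hk
  set v : E3 := cross3 ω ξ with hv
  set φ : E3 → ℝ := fun y => ρ y ^ (γ - 1) - k * (⟪cross3 ω y, cross3 ω y⟫ - 2 * ⟪v, y⟫) with hφ
  have key : ∀ x ∈ C, HasFDerivAt φ (0 : E3 →L[ℝ] ℝ) x := by
    intro x hx
    have hρx := hρ_pos x hx
    have hρne : ρ x ≠ 0 := ne_of_gt hρx
    have hd : DifferentiableAt ℝ ρ x :=
      (hρ_C1.differentiableOn one_ne_zero).differentiableAt (hC_open.mem_nhds hx)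
    set D := fderiv ℝ ρ x with hD
    have hρd : HasFDerivAt ρ D x := hd.hasFDerivAt
    have hpow : HasDerivAt (fun t : ℝ => t ^ γ) (γ * ρ x ^ (γ - 1)) (ρ x) :=
      Real.hasDerivAt_rpow_const (Or.inl hρne)
    have hf1 : HasFDerivAt (fun y => a * ρ y ^ γ) ((a * (γ * ρ x ^ (γ - 1))) • D) x := by
      have h := (hpow.comp_hasFDerivAt x hρd).const_mul a
      simpa [smul_smul, Function.comp] using h
    set Dg := (InnerProductSpace.toDual ℝ E3).symm D with hDg
    have hgrad1 : gradient (fun y => a * ρ y ^ γ) x = (a * (γ * ρ x ^ (γ - 1))) • Dg := by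
      rw [gradient, hf1.fderiv, map_smul, hDg]
    set w := cross3 ω (cross3 ω x + ξ) with hw
    have hmx := hmom x hx
    rw [hgrad1] at hmx
    have hppos : (0:ℝ) < ρ x ^ (γ - 1) := Real.rpow_pos_of_pos hρx _
    have hc1 : a * (γ * ρ x ^ (γ - 1)) ≠ 0 := by positivity
    have h2 : (a * (γ * ρ x ^ (γ - 1))) • Dg = (-(ρ x)) • w := by
      calc (a * (γ * ρ x ^ (γ - 1))) • Dg = -(-((a * (γ * ρ x ^ (γ - 1))) • Dg)) := (neg_neg _).symm
        _ = -(ρ x • w) := by rw [← hmx]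
        _ = (-(ρ x)) • w := by rw [neg_smul]
    have h3 : Dg = ((a * (γ * ρ x ^ (γ - 1)))⁻¹ * (-(ρ x))) • w := by
      rw [← smul_smul, ← h2, inv_smul_smul₀ hc1]
    have hpow2 : HasDerivAt (fun t : ℝ => t ^ (γ - 1)) ((γ - 1) * ρ x ^ (γ - 2)) (ρ x) := by
      have h := Real.hasDerivAt_rpow_const (x := ρ x) (p := γ - 1) (Or.inl hρne)
      convert h using 2
      ring
    have hf2 : HasFDerivAt (fun y => ρ y ^ (γ - 1)) (((γ - 1) * ρ x ^ (γ - 2)) • D) x := by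
      have h := hpow2.comp_hasFDerivAt x hρd
      exact h
    have hgg := hasGradientAt_g k ω v x
    have hggf : HasFDerivAt (fun y : E3 => k * (⟪cross3 ω y, cross3 ω y⟫ - 2 * ⟪v, y⟫))
        (InnerProductSpace.toDual ℝ E3 ((-(2*k)) • (cross3 ω (cross3 ω x) + v))) x :=
      hasGradientAt_iff_hasFDerivAt.1 hgg
    have hφd := hf2.sub hggf
    have hzero : ((γ - 1) * ρ x ^ (γ - 2)) • D
        = InnerProductSpace.toDual ℝ E3 ((-(2*k)) • (cross3 ω (cross3 ω x) + v)) := by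
      have hDD : D = InnerProductSpace.toDual ℝ E3 Dg := by
        rw [hDg, LinearIsometryEquiv.apply_symm_apply]
      rw [hDD, ← map_smul, h3, smul_smul]
      congr 1
      rw [hw, cross3_add]
      congr 1
      -- scalar identity
      have hr1 : ρ x ^ (γ - 2) * ρ x = ρ x ^ (γ - 1) := by
        have h := (Real.rpow_add hρx (γ - 2) 1).symm
        simpa [Real.rpow_one, show γ - 2 + 1 = γ - 1 by ring] using h
      rw [hk]
      field_simp
      linear_combination (1 - γ) * hr1
    rw [hzero] at hφd
    rw [sub_self] at hφd
    exact hφd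
  -- local constancy
  have hloc : ∀ x ∈ C, ∃ ε > 0, Metric.ball x ε ⊆ C ∧ ∀ y ∈ Metric.ball x ε, φ y = φ x := by
    intro x hx
    obtain ⟨ε, hε, hball⟩ := Metric.isOpen_iff.1 hC_open x hx
    refine ⟨ε, hε, hball, ?_⟩
    intro y hy
    have hdiff : DifferentiableOn ℝ φ (Metric.ball x ε) := fun z hz =>
      ((key z (hball hz)).differentiableAt).differentiableWithinAt
    have hzero : ∀ z ∈ Metric.ball x ε, fderivWithin ℝ φ (Metric.ball x ε) z = 0 := by
      intro z hz
      rw [fderivWithin_of_isOpen Metric.isOpen_ball hz]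
      exact (key z (hball hz)).fderiv
    exact (convex_ball x ε).is_const_of_fderivWithin_eq_zero hdiff hzero hy
      (Metric.mem_ball_self hε)
  obtain ⟨x₀, hx₀⟩ := hC_conn.nonempty
  have hconst : ∀ x ∈ C, φ x = φ x₀ := by
    have hSopen : IsOpen {x | x ∈ C ∧ φ x = φ x₀} := by
      rw [Metric.isOpen_iff]
      rintro x ⟨hxC, hxv⟩
      obtain ⟨ε, hε, hball, hcst⟩ := hloc x hxC
      exact ⟨ε, hε, fun y hy => ⟨hball hy, (hcst y hy).trans hxv⟩⟩
    have hTopen : IsOpen {x | x ∈ C ∧ φ x ≠ φ x₀} := by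
      rw [Metric.isOpen_iff]
      rintro x ⟨hxC, hxv⟩
      obtain ⟨ε, hε, hball, hcst⟩ := hloc x hxC
      exact ⟨ε, hε, fun y hy => ⟨hball hy, fun h => hxv ((hcst y hy).symm.trans h)⟩⟩
    have hdisj : Disjoint {x | x ∈ C ∧ φ x = φ x₀} {x | x ∈ C ∧ φ x ≠ φ x₀} := by
      rw [Set.disjoint_left]
      rintro x ⟨_, h1⟩ ⟨_, h2⟩
      exact h2 h1
    have hsub : C ⊆ {x | x ∈ C ∧ φ x = φ x₀} ∪ {x | x ∈ C ∧ φ x ≠ φ x₀} := by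
      intro x hx
      by_cases h : φ x = φ x₀
      · exact Or.inl ⟨hx, h⟩
      · exact Or.inr ⟨hx, h⟩
    have hne : (C ∩ {x | x ∈ C ∧ φ x = φ x₀}).Nonempty := ⟨x₀, hx₀, hx₀, rfl⟩
    have hCS := hC_conn.isPreconnected.subset_left_of_subset_union hSopen hTopen hdisj hsub hne
    exact fun x hx => (hCS hx).2
  refine ⟨φ x₀, fun x hx => ?_⟩
  have h := hconst x hx
  rw [hφ] at h
  beta_reduce at h
  have hn : ‖cross3 ω x‖ ^ 2 = ⟪cross3 ω x, cross3 ω x⟫ := (real_inner_self_eq_norm_sq _).symm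
  rw [hn]
  simp only [hφ]
  linarith


end
end

section
/- Lemma 5 (abstract boundedness lemma): For all constants c₁ ≥ 1 and c₂ > 0 there exists κ > 0 with the following property. Let T > 0, let ψ : [0,T] → ℝ be continuously differentiable with ψ(t) ≥ 0 for all t, let D : [0,T] → ℝ be continuous with D(t) ≥ 0 for all t, and let ε ≥ 0. If (i) ψ'(t) ≤ −D(t)·(1 − c₁·(ψ(t) + ψ(t)²)) + ε² for all t ∈ [0,T], (ii) D(t) + ε² ≥ c₂·ψ(t) for all t ∈ [0,T], and (iii) ψ(0) + ε ≤ κ, then ψ(t) ≤ κ for all t ∈ [0,T]. -/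
/-! The level `κ = min (min 1 (1/(4c₁))) (c₂/4)` is a barrier that `ψ` cannot cross: where
`ψ = κ`, the factor `1 - c₁(ψ + ψ²)` is at least `1/2` and `D ≥ c₂κ - ε²` with `ε² ≤ κ² ≤ c₂κ/4`,
so `ψ' ≤ -D/2 + ε² ≤ -c₂κ/8 < 0`. A function starting below a level at which its derivative
is negative stays below it. -/

open Set

theorem image_le_of_deriv_neg_at_level {f f' : ℝ → ℝ} {a b κ : ℝ}
    (hf : ∀ t ∈ Icc a b, HasDerivWithinAt f (f' t) (Icc a b) t) (ha : f a ≤ κ)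
    (hlevel : ∀ t ∈ Ico a b, f t = κ → f' t < 0) :
    ∀ t ∈ Icc a b, f t ≤ κ := by
  have hcont : ContinuousOn f (Icc a b) := fun t ht => (hf t ht).continuousWithinAt
  have hright : ∀ t ∈ Ico a b, HasDerivWithinAt f (f' t) (Ici t) t := fun t ht =>
    (hf t (Ico_subset_Icc_self ht)).mono_of_mem_nhdsWithin (Icc_mem_nhdsGE_of_mem ht)
  exact fun t ht => image_le_of_deriv_right_lt_deriv_boundary hcont hright ha
    (fun x => hasDerivAt_const x κ) hlevel ht

theorem one_half_le_one_sub_mul_add_sq {c κ : ℝ} (hc : 0 ≤ c) (hκ₀ : 0 ≤ κ) (hκ₁ : κ ≤ 1)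
    (hcκ : 4 * c * κ ≤ 1) : 1 / 2 ≤ 1 - c * (κ + κ ^ 2) := by
  have hsq : κ ^ 2 ≤ κ := by nlinarith
  nlinarith [mul_le_mul_of_nonneg_left hsq hc]

theorem deriv_neg_at_barrier {c₁ c₂ κ ε D ψ' : ℝ} (hc₁ : 0 ≤ c₁) (hκ₀ : 0 < κ) (hκ₁ : κ ≤ 1)
    (hκc₁ : 4 * c₁ * κ ≤ 1) (hκc₂ : 4 * κ ≤ c₂) (hε₀ : 0 ≤ ε) (hεκ : ε ≤ κ) (hD : 0 ≤ D)
    (hψ' : ψ' ≤ -D * (1 - c₁ * (κ + κ ^ 2)) + ε ^ 2) (hdiss : c₂ * κ ≤ D + ε ^ 2) :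
    ψ' < 0 := by
  have hfactor := one_half_le_one_sub_mul_add_sq hc₁ hκ₀.le hκ₁ hκc₁
  have hε_sq : ε ^ 2 ≤ κ * (c₂ / 4) := by nlinarith
  have hψ'_half : ψ' ≤ -D / 2 + ε ^ 2 := by nlinarith
  nlinarith

/-- **Lemma 5 (abstract boundedness lemma).** For all `c₁ ≥ 1` and `c₂ > 0` there is a `κ > 0`
such that: whenever `ψ` is continuously differentiable and nonnegative on `[0,T]`, `D` is
continuous and nonnegative on `[0,T]`, `ε ≥ 0`,
`ψ' ≤ −D·(1 − c₁·(ψ + ψ²)) + ε²` and `D + ε² ≥ c₂·ψ` on `[0,T]`, and `ψ(0) + ε ≤ κ`,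
then `ψ ≤ κ` on `[0,T]`. -/
theorem abstract_boundedness_lemma (c₁ c₂ : ℝ) (hc₁ : 1 ≤ c₁) (hc₂ : 0 < c₂) :
    ∃ κ > (0 : ℝ), ∀ (T : ℝ), 0 < T → ∀ (ψ ψ' D : ℝ → ℝ) (ε : ℝ),
      (∀ t ∈ Set.Icc 0 T, HasDerivWithinAt ψ (ψ' t) (Set.Icc 0 T) t) →
      ContinuousOn ψ' (Set.Icc 0 T) →
      (∀ t ∈ Set.Icc 0 T, 0 ≤ ψ t) →
      ContinuousOn D (Set.Icc 0 T) →
      (∀ t ∈ Set.Icc 0 T, 0 ≤ D t) →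
      0 ≤ ε →
      (∀ t ∈ Set.Icc 0 T, ψ' t ≤ -D t * (1 - c₁ * (ψ t + ψ t ^ 2)) + ε ^ 2) →
      (∀ t ∈ Set.Icc 0 T, c₂ * ψ t ≤ D t + ε ^ 2) →
      ψ 0 + ε ≤ κ →
      ∀ t ∈ Set.Icc 0 T, ψ t ≤ κ := by
  have hc₁₀ : 0 < c₁ := one_pos.trans_le hc₁
  set κ := min (min 1 (1 / (4 * c₁))) (c₂ / 4)
  have hκ₁ : κ ≤ 1 := (min_le_left _ _).trans (min_le_left _ _)
  have hκc₁ : 4 * c₁ * κ ≤ 1 := by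
    have : κ ≤ 1 / (4 * c₁) := (min_le_left _ _).trans (min_le_right _ _)
    rwa [le_div_iff₀ (by positivity), mul_comm] at this
  have hκc₂ : 4 * κ ≤ c₂ := by linarith [min_le_right (min 1 (1 / (4 * c₁))) (c₂ / 4)]
  refine ⟨κ, by positivity, fun T hT ψ ψ' D ε hψ _ hψ₀ _ hD₀ hε hψ' hdiss h₀ => ?_⟩
  have h0T : (0 : ℝ) ∈ Icc 0 T := ⟨le_rfl, hT.le⟩
  have hεκ : ε ≤ κ := by linarith [hψ₀ 0 h0T]
  refine image_le_of_deriv_neg_at_level hψ (by linarith [hψ₀ 0 h0T]) fun t ht hψt => ?_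
  have htT := Ico_subset_Icc_self ht
  have hψ't := hψ' t htT
  have hdisst := hdiss t htT
  rw [hψt] at hψ't hdisst
  exact deriv_neg_at_barrier hc₁₀.le (by positivity) hκ₁ hκc₁ hκc₂ hε hεκ (hD₀ t htT) hψ't hdisst
end
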